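/- arXiv:1310.2118 — 8 statements merged into one kernel-verified Lean document; each statement's English description precedes it below -/
import Mathlib

section
/- In a flow graph G = (V, A, s) where every vertex is reachable from s, the dominator relation (u dominates v if every path from s to v contains u) is reflexive and transitive, and its transitive reduction is a tree rooted at s: every vertex v ≠ s has a unique immediate dominator d(v) ≠ v such that every dominator of v other than v itself also dominates d(v). -/
universe u

variable {V : Type u}

attribute [local instance] Classical.propDecidable

/-- A flow graph: a directed graph with arc relation `A` and start vertex `s`. -/
structure FlowGraph (V : Type u) where
  A : V → V → Prop
  s : V

namespace FlowGraph

/-- `p` is a (directed) path from `a` to `b`: a nonempty list of vertices starting at `a`,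
ending at `b`, with consecutive vertices joined by arcs. -/
def IsPath (G : FlowGraph V) (p : List V) (a b : V) : Prop :=
  p ≠ [] ∧ p.head? = some a ∧ p.getLast? = some b ∧ p.Chain' G.A

def Reach (G : FlowGraph V) (a b : V) : Prop := ∃ p, G.IsPath p a b

/-- `u` dominates `v`: every path from the start vertex `s` to `v` contains `u`. -/
def Dom (G : FlowGraph V) (u v : V) : Prop :=
  ∀ p, G.IsPath p G.s v → u ∈ p

/-- Acyclic: no cycle of more than one vertex, i.e. no two distinct mutually reachable
vertices. -/
def Acyclic (G : FlowGraph V) : Prop :=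
  ∀ a b, a ≠ b → ¬ (G.Reach a b ∧ G.Reach b a)

/-- A spanning tree of `G` rooted at `s`, given by a parent function: every non-root
vertex has a tree arc from its parent, and the parent chain of every vertex reaches `s`. -/
structure SpanningTree (G : FlowGraph V) where
  parent : V → V
  parent_arc : ∀ v, v ≠ G.s → G.A (parent v) v
  parent_root : parent G.s = G.s
  root_reach : ∀ v, Relation.ReflTransGen (fun a b => parent a = b) v G.s

/-- `u` is an ancestor of `v` in the tree `T` (reflexively). -/
def Anc {G : FlowGraph V} (T : SpanningTree G) (u v : V) : Prop :=
  Relation.ReflTransGen (fun a b => T.parent a = b) v u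

/-- Replace occurrences of `v` by `x`. -/
noncomputable def repl (v x a : V) : V := if a = v then x else a

/-- Contraction of vertex `v` into vertex `x`: every arc end equal to `v` is replaced by `x`. -/
noncomputable def contract (G : FlowGraph V) (v x : V) : FlowGraph V where
  A a b := ∃ a' b', G.A a' b' ∧ a = repl v x a' ∧ b = repl v x b'
  s := G.s

/-- `x ∈ loop(u)`: `x` is a descendant of `u` in `T` with a path from `x` to `u` in `G`
containing only descendants of `u` in `T`. -/
def InLoop (G : FlowGraph V) (T : SpanningTree G) (u x : V) : Prop :=
  Anc T u x ∧ ∃ p, G.IsPath p x u ∧ ∀ y ∈ p, Anc T u y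

/-- `d` is an immediate-dominator function for `G`: for each `v ≠ s`, `d v ≠ v` is a
dominator of `v` and every dominator of `v` other than `v` itself dominates `d v`. -/
def IsIdom (G : FlowGraph V) (d : V → V) : Prop :=
  ∀ v, v ≠ G.s → d v ≠ v ∧ G.Dom (d v) v ∧
    ∀ u, G.Dom u v → u ≠ v → G.Dom u (d v)

end FlowGraph

/-!
Every dominator of `v` lies on any path `r` from `s` to `v`. Let `d` be the proper dominator of
`v` that occurs last on `r`. If a proper dominator `u` of `v` missed some path `P` from `s` to
`d`, then `P` followed by the part of `r` after `d` would be a path to `v` avoiding `u`, since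
`u` does not occur after `d` on `r`. So `d` is an immediate dominator. Uniqueness follows from
antisymmetry: on a path from `s` to `x`, whichever of `x`, `y` comes first is reached by a
prefix avoiding the other.
-/

open FlowGraph

namespace List

variable {α : Type*}

lemma exists_first_satisfying {p : α → Prop} :
    ∀ {l : List α}, (∃ x ∈ l, p x) → ∃ l₁ x l₂, l = l₁ ++ x :: l₂ ∧ p x ∧ ∀ y ∈ l₁, ¬ p y
  | [], h => by simp at h
  | a :: t, h => by
    by_cases ha : p a
    · exact ⟨[], a, t, rfl, ha, by simp⟩
    · have ht : ∃ x ∈ t, p x := by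
        obtain ⟨x, hx, hpx⟩ := h
        rcases mem_cons.1 hx with rfl | hx
        exacts [absurd hpx ha, ⟨x, hx, hpx⟩]
      obtain ⟨l₁, x, l₂, rfl, hpx, hl₁⟩ := exists_first_satisfying ht
      exact ⟨a :: l₁, x, l₂, rfl, hpx, by simpa [ha] using hl₁⟩

lemma exists_last_satisfying {p : α → Prop} :
    ∀ {l : List α}, (∃ x ∈ l, p x) → ∃ l₁ x l₂, l = l₁ ++ x :: l₂ ∧ p x ∧ ∀ y ∈ l₂, ¬ p y
  | [], h => by simp at h
  | a :: t, h => by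
    by_cases ht : ∃ x ∈ t, p x
    · obtain ⟨l₁, x, l₂, rfl, hpx, hl₂⟩ := exists_last_satisfying ht
      exact ⟨a :: l₁, x, l₂, rfl, hpx, hl₂⟩
    · push Not at ht
      obtain ⟨x, hx, hpx⟩ := h
      rcases mem_cons.1 hx with rfl | hx
      exacts [⟨[], x, t, rfl, hpx, ht⟩, absurd hpx (ht x hx)]

end List

namespace FlowGraph

variable {G : FlowGraph V}

namespace IsPath

lemma start_mem {p : List V} {a b : V} (h : G.IsPath p a b) : a ∈ p :=
  List.mem_of_mem_head? h.2.1

lemma end_mem {p : List V} {a b : V} (h : G.IsPath p a b) : b ∈ p :=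
  List.mem_of_mem_getLast? h.2.2.1

lemma takeUntil {l₁ l₂ : List V} {a b u : V} (h : G.IsPath (l₁ ++ u :: l₂) a b) :
    G.IsPath (l₁ ++ [u]) a u := by
  obtain ⟨-, hhead, -, hchain⟩ := h
  refine ⟨by simp, by cases l₁ <;> simpa using hhead, List.getLast?_concat, ?_⟩
  exact List.IsChain.infix hchain ⟨[], l₂, by simp⟩

lemma dropUntil {l₁ l₂ : List V} {a b u : V} (h : G.IsPath (l₁ ++ u :: l₂) a b) :
    G.IsPath (u :: l₂) u b := by
  obtain ⟨-, -, hlast, hchain⟩ := h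
  exact ⟨by simp, rfl, by rwa [List.getLast?_append_cons] at hlast,
    List.IsChain.infix hchain ⟨l₁, [], by simp⟩⟩

lemma append {p q : List V} {a b c : V} (hp : G.IsPath p a b) (hq : G.IsPath (b :: q) b c) :
    G.IsPath (p ++ q) a c := by
  obtain ⟨hne, hhead, hlast, hchain⟩ := hp
  obtain ⟨-, -, hlast', hchain'⟩ := hq
  obtain ⟨hb, hq⟩ := List.isChain_cons.1 hchain'
  refine ⟨by simp [hne], by cases p <;> simp_all, ?_, hchain.append hq ?_⟩
  · cases q with
    | nil => simpa [hlast] using hlast'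
    | cons x q => rwa [List.getLast?_append_cons, ← List.getLast?_cons_cons]
  · intro x hx y hy
    rw [hlast, Option.mem_some_iff] at hx
    exact hx ▸ hb y hy

end IsPath

lemma dom_refl (G : FlowGraph V) (v : V) : G.Dom v v :=
  fun _ hp => hp.end_mem

lemma dom_start (G : FlowGraph V) (v : V) : G.Dom G.s v :=
  fun _ hp => hp.start_mem

lemma Dom.trans {u v w : V} (huv : G.Dom u v) (hvw : G.Dom v w) : G.Dom u w := by
  intro p hp
  obtain ⟨l₁, l₂, rfl⟩ := List.append_of_mem (hvw p hp)
  have hu := huv _ hp.takeUntil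
  simp only [List.mem_append, List.mem_cons] at hu ⊢
  tauto

lemma Dom.antisymm {x y : V} (hx : G.Reach G.s x) (hxy : G.Dom x y) (hyx : G.Dom y x) :
    x = y := by
  obtain ⟨q, hq⟩ := hx
  obtain ⟨l₁, z, l₂, rfl, hz, hl₁⟩ :=
    List.exists_first_satisfying (p := fun z => z = x ∨ z = y) ⟨x, hq.end_mem, Or.inl rfl⟩
  have hz_of_dom : ∀ w, G.Dom w z → w = x ∨ w = y → w = z := fun w hw hwxy => by
    have := hw _ hq.takeUntil
    simp only [List.mem_append, List.mem_singleton] at this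
    exact this.resolve_left fun h => hl₁ w h hwxy
  rcases hz with rfl | rfl
  exacts [(hz_of_dom y hyx (Or.inr rfl)).symm, hz_of_dom x hxy (Or.inl rfl)]

lemma Dom.of_notMem_suffix {u v d : V} {l₁ l₂ : List V} (huv : G.Dom u v)
    (hr : G.IsPath (l₁ ++ d :: l₂) G.s v) (hu : u ∉ l₂) : G.Dom u d := by
  intro P hP
  have := huv _ (hP.append hr.dropUntil)
  rw [List.mem_append] at this
  exact this.resolve_right hu

end FlowGraph

theorem stmt0_general (G : FlowGraph V) (hreach : ∀ v, G.Reach G.s v) :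
    (∀ v, G.Dom v v) ∧
    (∀ u v w, G.Dom u v → G.Dom v w → G.Dom u w) ∧
    (∀ v, v ≠ G.s → ∃! dv : V, dv ≠ v ∧ G.Dom dv v ∧
      ∀ u, G.Dom u v → u ≠ v → G.Dom u dv) := by
  refine ⟨G.dom_refl, fun u v w => Dom.trans, fun v hv => ?_⟩
  obtain ⟨r, hr⟩ := hreach v
  obtain ⟨l₁, d, l₂, rfl, ⟨hdv, hdne⟩, hl₂⟩ :=
    List.exists_last_satisfying (p := fun u => G.Dom u v ∧ u ≠ v)
      ⟨G.s, hr.start_mem, G.dom_start v, Ne.symm hv⟩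
  have hidom : ∀ u, G.Dom u v → u ≠ v → G.Dom u d := fun u huv hune =>
    huv.of_notMem_suffix hr fun hu => hl₂ u hu ⟨huv, hune⟩
  refine ⟨d, ⟨hdne, hdv, hidom⟩, fun d' ⟨hd'ne, hd'v, hidom'⟩ => ?_⟩
  exact Dom.antisymm (hreach d') (hidom d' hd'v hd'ne) (hidom' d hdv hdne)

/-- The dominator relation of a flow graph is reflexive and transitive, and every
vertex `v ≠ s` has a unique immediate dominator. -/
theorem stmt0 [Fintype V] (G : FlowGraph V) (hreach : ∀ v, G.Reach G.s v) :
    (∀ v, G.Dom v v) ∧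
    (∀ u v w, G.Dom u v → G.Dom v w → G.Dom u w) ∧
    (∀ v, v ≠ G.s → ∃! dv : V, dv ≠ v ∧ G.Dom dv v ∧
      ∀ u, G.Dom u v → u ≠ v → G.Dom u dv) :=
  stmt0_general G hreach
end

section
/- Let G be a flow graph with spanning tree T whose vertices are numbered 1..n in a bottom-up order (each v ≠ s is numbered less than its parent p(v)). Let v ≠ s have no entering cross arc or back arc with respect to T, let (u, v) be an arc into v with u maximum among sources of arcs into v, and suppose d(p(v)) ≥ u. Then if u = p(v), d(v) = u, and otherwise d(v) = d(p(v)). -/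
universe u

variable {V : Type u}

attribute [local instance] Classical.propDecidable

/-!
With a bottom-up numbering every dominator of a vertex is a tree ancestor of it, so dominance
is antisymmetric and `d w` is the unique vertex `a ≠ w` such that `a` dominates `w` and `d w`
dominates `a`. A vertex `a` dominates `v ≠ s` as soon as it dominates every source of a non-loop
arc into `v`; as `v` has no entering cross or back arcs, these sources are ancestors of `p v`
numbered at most `u`. If `u = p v` the only such source is `p v`. Otherwise every source lies on
the tree path between `p v` and `d (p v)`, so `d (p v)` dominates it, while `p v` does not dominate
`v` because of the arc `(u, v)`.
-/

namespace FlowGraph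

variable {G : FlowGraph V} {p q : List V} {a b c w x : V}

theorem isPath_iff :
    G.IsPath p a b ↔ p ≠ [] ∧ p.head? = some a ∧ p.getLast? = some b ∧ p.IsChain G.A :=
  Iff.rfl

theorem isPath_singleton : G.IsPath [a] b c ↔ b = a ∧ c = a := by
  simp [isPath_iff, eq_comm]

theorem isPath_cons_cons {l : List V} :
    G.IsPath (a :: b :: l) x c ↔ x = a ∧ G.A a b ∧ G.IsPath (b :: l) b c := by
  simp only [isPath_iff, List.head?_cons, List.getLast?_cons_cons, List.isChain_cons_cons,
    Option.some.injEq, ne_eq, reduceCtorEq, not_false_eq_true, true_and, eq_comm]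
  tauto

theorem IsPath.last_mem (h : G.IsPath p a b) : b ∈ p :=
  List.mem_of_getLast? h.2.2.1

theorem IsPath.cons (h : G.IsPath p b c) (hab : G.A a b) : G.IsPath (a :: p) a c := by
  obtain ⟨b', l, rfl⟩ := List.exists_cons_of_ne_nil h.1
  obtain rfl : b' = b := by simpa using h.2.1
  exact isPath_cons_cons.2 ⟨rfl, hab, h⟩

theorem IsPath.concat (h : G.IsPath p a x) (hxw : G.A x w) : G.IsPath (p ++ [w]) a w := by
  induction p generalizing a with
  | nil => exact absurd rfl h.1
  | cons b l ih =>
    cases l with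
    | nil =>
      obtain ⟨rfl, rfl⟩ := isPath_singleton.1 h
      exact isPath_cons_cons.2 ⟨rfl, hxw, isPath_singleton.2 ⟨rfl, rfl⟩⟩
    | cons b' l =>
      obtain ⟨rfl, hab, h'⟩ := isPath_cons_cons.1 h
      exact (ih h').cons hab

theorem IsPath.exists_prefix_arc (h : G.IsPath p a b) (hab : a ≠ b) :
    ∃ q x, G.IsPath q a x ∧ G.A x b ∧ b ∉ q ∧ q ⊆ p := by
  induction p generalizing a with
  | nil => exact absurd rfl h.1
  | cons a' l ih =>
    cases l with
    | nil => exact absurd ((isPath_singleton.1 h).1.trans (isPath_singleton.1 h).2.symm) hab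
    | cons c l =>
      obtain ⟨rfl, hac, h'⟩ := isPath_cons_cons.1 h
      by_cases hcb : c = b
      · subst hcb
        exact ⟨[a], a, isPath_singleton.2 ⟨rfl, rfl⟩, hac, by simpa using hab.symm, by simp⟩
      · obtain ⟨q, x, hq, hxb, hbq, hqp⟩ := ih h' hcb
        exact ⟨a :: q, x, hq.cons hac, hxb, by simp [hbq, hab.symm],
          List.cons_subset_cons _ hqp⟩

theorem dom_refl_s3 : G.Dom a a := fun _ hp => hp.last_mem

theorem Dom.of_arc (h : G.Dom a w) (haw : a ≠ w) (hxw : G.A x w) : G.Dom a x := fun p hp =>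
  (List.mem_append.1 (h _ (hp.concat hxw))).resolve_right (by simpa using haw)

theorem dom_of_forall_arc (hw : w ≠ G.s) (h : ∀ x, G.A x w → x ≠ w → G.Dom a x) :
    G.Dom a w := by
  intro p hp
  obtain ⟨q, x, hq, hxw, hwq, hqp⟩ := hp.exists_prefix_arc hw.symm
  exact hqp (h x hxw (fun hx => hwq (hx ▸ hq.last_mem)) q hq)

section Tree

variable {T : G.SpanningTree}

theorem Anc.parent_of_ne (h : Anc T a b) (hab : a ≠ b) : Anc T a (T.parent b) := by
  rcases Relation.ReflTransGen.cases_head h with rfl | ⟨c, rfl, h'⟩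
  · exact absurd rfl hab
  · exact h'

theorem Anc.total (ha : Anc T a w) (hb : Anc T b w) : Anc T a b ∨ Anc T b a :=
  (Relation.ReflTransGen.total_of_right_unique (fun _ _ _ h₁ h₂ => h₁.symm.trans h₂) ha hb).symm

end Tree

section BottomUp

variable [PartialOrder V] (T : G.SpanningTree)

def SpanningTree.IsBottomUp : Prop := ∀ x, x ≠ G.s → x < T.parent x

variable {T}

theorem Anc.le (hT : T.IsBottomUp) (h : Anc T a b) : b ≤ a := by
  induction h with
  | refl => exact le_rfl
  | @tail y z _ hyz ih =>
    by_cases hy : y = G.s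
    · rwa [← hyz, hy, T.parent_root, ← hy]
    · exact ih.trans (hyz ▸ (hT y hy).le)

theorem le_root (hT : T.IsBottomUp) (x : V) : x ≤ G.s :=
  Anc.le hT (T.root_reach x)

theorem IsPath.exists_append_tree (hT : T.IsBottomUp) (hq : G.IsPath q a x) (h : Anc T x w) :
    ∃ r, G.IsPath (q ++ r) a w ∧ ∀ y ∈ r, Anc T y w ∧ y < x := by
  induction h using Relation.ReflTransGen.head_induction_on with
  | refl => exact ⟨[], by simpa using hq, by simp⟩
  | @head w c hwc hcx ih =>
    obtain ⟨r, hr, hry⟩ := ih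
    by_cases hw : w = G.s
    · have hcw : c = w := by rw [← hwc, hw, T.parent_root]
      subst hcw
      exact ⟨r, hr, hry⟩
    · refine ⟨r ++ [w], by simpa using hr.concat (hwc ▸ T.parent_arc w hw), fun y hy => ?_⟩
      rcases List.mem_append.1 hy with hy | hy
      · exact ⟨Relation.ReflTransGen.head hwc (hry y hy).1, (hry y hy).2⟩
      · obtain rfl := List.mem_singleton.1 hy
        exact ⟨Relation.ReflTransGen.refl, (hT y hw).trans_le (hwc ▸ Anc.le hT hcx)⟩

theorem exists_treePath (hT : T.IsBottomUp) (w : V) :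
    ∃ p, G.IsPath p G.s w ∧ ∀ y ∈ p, Anc T y w := by
  obtain ⟨r, hr, hry⟩ :=
    (isPath_singleton.2 ⟨rfl, rfl⟩ : G.IsPath [G.s] G.s G.s).exists_append_tree hT
      (T.root_reach w)
  refine ⟨_, hr, fun y hy => ?_⟩
  rcases List.mem_cons.1 hy with rfl | hy
  · exact T.root_reach w
  · exact (hry y hy).1

theorem Dom.anc (hT : T.IsBottomUp) (h : G.Dom a w) : Anc T a w := by
  obtain ⟨p, hp, hpw⟩ := exists_treePath hT w
  exact hpw a (h p hp)

theorem Dom.antisymm_s3 (hT : T.IsBottomUp) (hab : G.Dom a b) (hba : G.Dom b a) : a = b :=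
  le_antisymm ((hba.anc hT).le hT) ((hab.anc hT).le hT)

theorem Dom.of_anc_of_anc (hT : T.IsBottomUp) (h : G.Dom a w) (hax : Anc T a x)
    (hxw : Anc T x w) : G.Dom a x := by
  intro q hq
  obtain ⟨r, hr, hry⟩ := hq.exists_append_tree hT hxw
  exact (List.mem_append.1 (h _ hr)).resolve_right fun ha => (hry a ha).2.not_ge (hax.le hT)

theorem IsIdom.eq_of_dom {d : V → V} (hT : T.IsBottomUp) (hd : G.IsIdom d) (hw : w ≠ G.s)
    (ha : G.Dom a w) (haw : a ≠ w) (hda : G.Dom (d w) a) : d w = a :=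
  hda.antisymm_s3 hT ((hd w hw).2.2 a ha haw)

end BottomUp

end FlowGraph

open FlowGraph

theorem stmt3_general [LinearOrder V] (G : FlowGraph V) (T : SpanningTree G)
    (hbu : ∀ x, x ≠ G.s → x < T.parent x)
    (d : V → V) (hd : G.IsIdom d)
    (v : V) (hv : v ≠ G.s)
    (hnocb : ∀ x, G.A x v → Anc T x v)
    (u : V) (hu : G.A u v) (humax : ∀ x, G.A x v → x ≤ u)
    (hdp : u ≤ d (T.parent v)) :
    (u = T.parent v → d v = u) ∧ (u ≠ T.parent v → d v = d (T.parent v)) := by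
  have hT : T.IsBottomUp := hbu
  have hvp : v < T.parent v := hbu v hv
  have hdv : G.Dom (d v) (T.parent v) := (hd v hv).2.1.of_arc (hd v hv).1 (T.parent_arc v hv)
  have hsrc : ∀ x, G.A x v → x ≠ v → Anc T x (T.parent v) := fun x hx hxv =>
    (hnocb x hx).parent_of_ne hxv
  refine ⟨fun hup => ?_, fun hup => ?_⟩
  · subst hup
    refine hd.eq_of_dom hT hv (dom_of_forall_arc hv fun x hx hxv => ?_) hvp.ne' hdv
    rw [le_antisymm (humax x hx) ((hsrc x hx hxv).le hT)]
    exact dom_refl_s3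
  · have hpu : T.parent v < u := (humax _ (T.parent_arc v hv)).lt_of_ne (Ne.symm hup)
    have hp : T.parent v ≠ G.s := fun h => (h ▸ hpu).not_ge (le_root hT u)
    have hdp_anc : Anc T (d (T.parent v)) (T.parent v) := (hd _ hp).2.1.anc hT
    have hdom : G.Dom (d (T.parent v)) v := dom_of_forall_arc hv fun x hx hxv => by
      have hdx : Anc T (d (T.parent v)) x := by
        rcases hdp_anc.total (hsrc x hx hxv) with h | h
        · exact h
        · obtain rfl := le_antisymm ((humax x hx).trans hdp) (h.le hT)
          exact Relation.ReflTransGen.refl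
      exact (hd _ hp).2.1.of_anc_of_anc hT hdx (hsrc x hx hxv)
    -- otherwise `p v` would dominate the source `u`, hence be an ancestor of `u > p v`
    have hdvp : d v ≠ T.parent v := fun h =>
      hpu.not_ge ((((h ▸ (hd v hv).2.1).of_arc hvp.ne' hu).anc hT).le hT)
    exact hd.eq_of_dom hT hv hdom (hvp.trans (hpu.trans_le hdp)).ne'
      ((hd _ hp).2.2 _ hdv hdvp)

/-- If `v ≠ s` has no entering cross or back arc, `(u, v)` is an arc into `v` with `u`
maximum, and `d (p v) ≥ u`, then `d v = u` if `u = p v` and `d v = d (p v)` otherwise.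
(Vertices carry a bottom-up numbering: `x < p x` for `x ≠ s`.) -/
theorem stmt3 [LinearOrder V] (G : FlowGraph V) (T : SpanningTree G)
    (hreach : ∀ v, G.Reach G.s v)
    (hbu : ∀ x, x ≠ G.s → x < T.parent x)
    (d : V → V) (hd : G.IsIdom d)
    (v : V) (hv : v ≠ G.s)
    (hnocb : ∀ x, G.A x v → Anc T x v)
    (u : V) (hu : G.A u v) (humax : ∀ x, G.A x v → x ≤ u)
    (hdp : u ≤ d (T.parent v)) :
    (u = T.parent v → d v = u) ∧ (u ≠ T.parent v → d v = d (T.parent v)) :=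
  stmt3_general G T hbu d hd v hv hnocb u hu humax hdp
end

section
/- Let v ≠ s be a vertex such that d(x) ≥ u ≥ p(v) for every descendant x of v in the spanning tree T, where u is some vertex with u ≥ p(v) in a bottom-up numbering. Then v dominates no vertex other than itself; that is, v is a leaf of the dominator tree. -/
universe u

variable {V : Type u}

attribute [local instance] Classical.propDecidable

open FlowGraph

/-
A dominator of `w` lies on the tree path from `s` to `w`, so it is a tree ancestor
of `w` and, in a bottom-up numbering, has a number at least that of `w`. If `v` dominated some
`w ≠ v`, it would also dominate `d w`, whence `d w ≤ v < p v ≤ u ≤ d w`.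
-/

namespace FlowGraph

variable {G : FlowGraph V}

theorem isPath_singleton_s5 (a : V) : G.IsPath [a] a a :=
  ⟨List.cons_ne_nil a [], rfl, rfl, List.isChain_singleton a⟩

theorem IsPath.concat_s5 {l : List V} {a b c : V} (hl : G.IsPath l a b) (hbc : G.A b c) :
    G.IsPath (l ++ [c]) a c := by
  obtain ⟨hne, hhead, hlast, hchain⟩ := hl
  refine ⟨by simp, by rwa [List.head?_append_of_ne_nil _ hne], by simp, ?_⟩
  refine List.isChain_append.mpr ⟨hchain, List.isChain_singleton c, ?_⟩
  intro x hx y hy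
  rw [hlast, Option.mem_some_iff] at hx
  cases hx
  cases hy
  exact hbc

theorem Dom.eq_start {v : V} (h : G.Dom v G.s) : v = G.s :=
  List.mem_singleton.mp (h [G.s] (isPath_singleton_s5 G.s))

namespace SpanningTree

variable (T : SpanningTree G)

theorem le_parent [LinearOrder V] (hbu : ∀ x, x ≠ G.s → x < T.parent x) (x : V) :
    x ≤ T.parent x := by
  by_cases hx : x = G.s
  · rw [hx, T.parent_root]
  · exact (hbu x hx).le

theorem exists_isPath_start_forall_mem_anc (w : V) :
    ∃ l, G.IsPath l G.s w ∧ ∀ y ∈ l, Anc T y w := by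
  have root_path : ∃ l, G.IsPath l G.s G.s ∧ ∀ y ∈ l, Anc T y G.s :=
    ⟨[G.s], isPath_singleton_s5 G.s, fun y hy => List.mem_singleton.mp hy ▸ .refl⟩
  induction T.root_reach w using Relation.ReflTransGen.head_induction_on with
  | refl => exact root_path
  | @head a _ hparent _ ih =>
    by_cases ha : a = G.s
    · exact ha ▸ root_path
    obtain ⟨l, hl, hanc⟩ := ih
    refine ⟨l ++ [a], hl.concat_s5 (hparent ▸ T.parent_arc a ha), fun y hy => ?_⟩
    rcases List.mem_append.mp hy with hy | hy
    · exact .head hparent (hanc y hy)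
    · exact List.mem_singleton.mp hy ▸ .refl

end SpanningTree

theorem Anc.le_s5 [LinearOrder V] {T : SpanningTree G} (hbu : ∀ x, x ≠ G.s → x < T.parent x)
    {a b : V} (h : Anc T a b) : b ≤ a := by
  induction h with
  | refl => exact le_rfl
  | @tail c _ _ hparent ih => exact hparent ▸ ih.trans (T.le_parent hbu c)

theorem Dom.anc_s5 {v w : V} (T : SpanningTree G) (h : G.Dom v w) : Anc T v w := by
  obtain ⟨l, hl, hanc⟩ := T.exists_isPath_start_forall_mem_anc w
  exact hanc v (h l hl)

end FlowGraph

theorem stmt5_general [LinearOrder V] (G : FlowGraph V) (T : SpanningTree G)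
    (hbu : ∀ x, x ≠ G.s → x < T.parent x)
    (d : V → V) (hd : G.IsIdom d)
    (v : V) (hv : v ≠ G.s)
    (u : V) (hup : T.parent v ≤ u)
    (hdesc : ∀ x, Anc T v x → x ≠ G.s → u ≤ d x) :
    ∀ w, G.Dom v w → w = v := by
  intro w hvw
  by_contra hwv
  have hws : w ≠ G.s := fun hws => hv (hws ▸ hvw).eq_start
  have hv_dom_idom : G.Dom v (d w) := (hd w hws).2.2 v hvw (Ne.symm hwv)
  have hidom_le : d w ≤ v := (hv_dom_idom.anc_s5 T).le_s5 hbu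
  have hu_le : u ≤ d w := hdesc w (hvw.anc_s5 T) hws
  exact (hbu v hv).not_ge (hup.trans (hu_le.trans hidom_le))

/-- If `d x ≥ u ≥ p v` for every descendant `x` of `v` in `T`, then `v` dominates no
vertex other than itself (it is a leaf of the dominator tree). -/
theorem stmt5 [LinearOrder V] (G : FlowGraph V) (T : SpanningTree G)
    (hreach : ∀ v, G.Reach G.s v)
    (hbu : ∀ x, x ≠ G.s → x < T.parent x)
    (d : V → V) (hd : G.IsIdom d)
    (v : V) (hv : v ≠ G.s)
    (u : V) (hup : T.parent v ≤ u)
    (hdesc : ∀ x, Anc T v x → x ≠ G.s → u ≤ d x) :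
    ∀ w, G.Dom v w → w = v :=
  stmt5_general G T hbu d hd v hv u hup hdesc
end

section
/- Let G be a flow graph with spanning tree T. For any two vertices u and v, the sets loop(u) and loop(v) are either disjoint or nested (one contains the other). -/
universe u

variable {V : Type u}

attribute [local instance] Classical.propDecidable

open FlowGraph

/-!
Both `loop(u)` and `loop(v)` consist of descendants, so if they share a vertex `x` then `u` and
`v` are ancestors of `x` and hence comparable in the tree, say `v` above `u`. Every `y ∈ loop(u)`
then lies in `loop(v)`: walk from `y` to `u` inside `loop(u)`, down tree arcs from `u` to `x`,
and from `x` to `v` inside `loop(v)`; all these vertices descend from `v`.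
-/

namespace FlowGraph

theorem exists_isPath_forall_mem_iff {G : FlowGraph V} {P : V → Prop} {a b : V} :
    (∃ p, G.IsPath p a b ∧ ∀ y ∈ p, P y) ↔
      P a ∧ Relation.ReflTransGen (fun x y => G.A x y ∧ P y) a b := by
  constructor
  · rintro ⟨p, ⟨hne, hhead, hlast, hchain⟩, hP⟩
    obtain ⟨l, rfl⟩ : ∃ l, p = a :: l := by
      cases p with
      | nil => exact absurd rfl hne
      | cons c l => exact ⟨l, by simpa using hhead⟩
    refine ⟨hP a List.mem_cons_self, List.relationReflTransGen_of_exists_isChain_cons l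
      (hchain.imp_of_mem_imp fun x y _ hy hxy => ⟨hxy, hP y hy⟩) ?_⟩
    simpa [List.getLast?_eq_some_getLast] using hlast
  · rintro ⟨ha, hab⟩
    obtain ⟨l, hchain, hlast⟩ := List.exists_isChain_cons_of_relationReflTransGen hab
    refine ⟨a :: l, ⟨List.cons_ne_nil a l, rfl, by simp [List.getLast?_eq_some_getLast, hlast],
      hchain.imp fun _ _ h => h.1⟩, ?_⟩
    rintro y (_ | ⟨_, hy⟩)
    · exact ha
    · exact hchain.cons_induction P l (fun _ _ h _ => h.2) ha y hy

theorem inLoop_iff {G : FlowGraph V} {T : SpanningTree G} {u x : V} :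
    InLoop G T u x ↔
      Anc T u x ∧ Relation.ReflTransGen (fun a b => G.A a b ∧ Anc T u b) x u := by
  rw [InLoop, exists_isPath_forall_mem_iff]
  exact and_congr_right fun hx => and_iff_right hx

namespace SpanningTree

variable {G : FlowGraph V} (T : SpanningTree G)

theorem anc_total {u v x : V} (hu : Anc T u x) (hv : Anc T v x) : Anc T u v ∨ Anc T v u :=
  Relation.ReflTransGen.total_of_right_unique (fun _ _ _ hb hc => hb.symm.trans hc) hv hu

theorem reflTransGen_of_anc {u x : V} (h : Anc T u x) :
    Relation.ReflTransGen (fun a b => G.A a b ∧ Anc T u b) u x := by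
  induction h using Relation.ReflTransGen.head_induction_on with
  | refl => exact .refl
  | @head a b hab hbu ih =>
    by_cases ha : a = G.s
    · subst ha
      rwa [← hab, T.parent_root] at ih
    · exact ih.tail ⟨hab ▸ T.parent_arc a ha, .head hab hbu⟩

end SpanningTree

theorem inLoop_of_inLoop_of_anc {G : FlowGraph V} {T : SpanningTree G} {u v x y : V}
    (hvu : Anc T v u) (hxu : InLoop G T u x) (hxv : InLoop G T v x) (hyu : InLoop G T u y) :
    InLoop G T v y := by
  rw [inLoop_iff] at *
  have hdesc : (fun a b => G.A a b ∧ Anc T u b) ≤ fun a b => G.A a b ∧ Anc T v b :=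
    fun _ _ h => ⟨h.1, h.2.trans hvu⟩
  have hyu' := Relation.ReflTransGen.mono hdesc _ _ hyu.2
  have hux := Relation.ReflTransGen.mono hdesc _ _ (T.reflTransGen_of_anc hxu.1)
  exact ⟨hyu.1.trans hvu, (hyu'.trans hux).trans hxv.2⟩

end FlowGraph

open FlowGraph

theorem stmt7_general (G : FlowGraph V) (T : SpanningTree G)
    (u v : V) :
    (∀ x, InLoop G T u x → ¬ InLoop G T v x) ∨
    (∀ x, InLoop G T u x → InLoop G T v x) ∨
    (∀ x, InLoop G T v x → InLoop G T u x) := by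
  by_cases h : ∃ x, InLoop G T u x ∧ InLoop G T v x
  · obtain ⟨x, hxu, hxv⟩ := h
    rcases T.anc_total hxu.1 hxv.1 with huv | hvu
    · exact Or.inr (Or.inr fun _ => inLoop_of_inLoop_of_anc huv hxv hxu)
    · exact Or.inr (Or.inl fun _ => inLoop_of_inLoop_of_anc hvu hxu hxv)
  · exact Or.inl fun x hxu hxv => h ⟨x, hxu, hxv⟩

/-- For any two vertices `u`, `v`, the sets `loop(u)` and `loop(v)` are either disjoint
or nested. -/
theorem stmt7 (G : FlowGraph V) (T : SpanningTree G)
    (hreach : ∀ v, G.Reach G.s v) (u v : V) :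
    (∀ x, InLoop G T u x → ¬ InLoop G T v x) ∨
    (∀ x, InLoop G T u x → InLoop G T v x) ∨
    (∀ x, InLoop G T v x → InLoop G T u x) :=
  stmt7_general G T u v
end

section
/- If loop(u) is reducible (every arc (v, w) with w in loop(u) and v not in loop(u) has w = u), then u dominates every vertex of loop(u). -/
universe u

variable {V : Type u}

attribute [local instance] Classical.propDecidable

open FlowGraph

lemma anc_s_eq {G : FlowGraph V} (T : SpanningTree G) {u : V}
    (h : Anc T u G.s) : u = G.s := by
  have : ∀ v, Relation.ReflTransGen (fun a b => T.parent a = b) G.s v → v = G.s := by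
    intro v hv
    induction hv with
    | refl => rfl
    | tail _ hstep ih => subst ih; rw [T.parent_root] at hstep; exact hstep.symm
  exact this u h

/-- If `loop(u)` is reducible (every entry is a head entry), then `u` dominates every
vertex of `loop(u)`. -/
theorem stmt8 (G : FlowGraph V) (T : SpanningTree G)
    (hreach : ∀ v, G.Reach G.s v) (u : V)
    (hred : ∀ v w, G.A v w → InLoop G T u w → ¬ InLoop G T u v → w = u) :
    ∀ x, InLoop G T u x → G.Dom u x := by
  suffices h : ∀ p : List V, ∀ x, InLoop G T u x → G.IsPath p G.s x → u ∈ p by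
    intro x hx p hp; exact h p x hx hp
  intro p
  induction p using List.reverseRecOn with
  | nil => intro x _ hp; exact absurd rfl hp.1
  | append_singleton q b ih =>
    intro x hx hp
    obtain ⟨hne, hhead, hlast, hchain⟩ := hp
    have hb : b = x := by
      simp at hlast
      exact hlast
    subst hb
    by_cases hbu : b = u
    · subst hbu; exact List.mem_append_right _ (List.mem_singleton_self _)
    rcases List.eq_nil_or_concat q with hq | hq
    · subst hq
      simp only [List.nil_append, List.head?_cons] at hhead
      have hbs : b = G.s := Option.some_injective _ hhead
      exact absurd ((anc_s_eq T (hbs ▸ hx.1)).trans hbs.symm).symm hbu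
    · obtain ⟨q', y, rfl⟩ := hq
      simp only [List.concat_eq_append] at *
      have hchain' := List.isChain_append.mp hchain
      have harcby : G.A y b := by
        refine hchain'.2.2 y ?_ b rfl
        simp
      by_cases hy : InLoop G T u y
      · have hqpath : G.IsPath (q' ++ [y]) G.s y := by
          refine ⟨by simp, ?_, by simp, hchain'.1⟩
          rw [← hhead, List.append_assoc]
          rcases q' with _ | ⟨a, q''⟩ <;> simp
        exact List.mem_append_left _ (ih y hy hqpath)
      · exact absurd (hred y b harcby hx hy) hbu
end

section
/- Let G be a flow graph with depth-first spanning tree T and loop nesting forest H. Form G' from G by: (i) deleting all back arcs; (ii) for each vertex u such that loop(u) and loop(h(u)) have a common non-head entry (v, w), adding the arc (p(h(u)), u); and (iii) for each non-head entry (v, w) into some loop, adding the arc (v, u) where loop(u) is the largest loop with entry (v, w). Then G' is acyclic. -/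
universe u

variable {V : Type u}

attribute [local instance] Classical.propDecidable

open FlowGraph

/-- `(v, w)` is an entry to `loop(u)`: an arc with `w ∈ loop(u)` and `v ∉ loop(u)`. -/
def IsEntry (G : FlowGraph V) (T : SpanningTree G) (u v w : V) : Prop :=
  G.A v w ∧ InLoop G T u w ∧ ¬ InLoop G T u v

/-- Ramalingam's streamlined transformation: delete all back arcs; for each `u` such
that `loop(u)` and `loop(h(u))` have a common non-head entry `(v, w)`, add arc
`(p (h u), u)`; and for each non-head entry `(v, w)` into some loop, add arc `(v, u)`
where `loop(u)` is the largest loop with entry `(v, w)`. -/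
def ramalingam (G : FlowGraph V) (T : SpanningTree G) (h : V → Option V) : FlowGraph V where
  A a b :=
    (G.A a b ∧ ¬ (Anc T b a ∧ a ≠ b)) ∨
    (∃ hu v w, h b = some hu ∧ a = T.parent hu ∧
      IsEntry G T b v w ∧ w ≠ b ∧ IsEntry G T hu v w ∧ w ≠ hu) ∨
    (∃ w, (∃ u0, IsEntry G T u0 a w ∧ w ≠ u0) ∧ IsEntry G T b a w ∧
      ∀ u', IsEntry G T u' a w → ∀ x, InLoop G T u' x → InLoop G T b x)
  s := G.s

private lemma inloop_of_arc (G : FlowGraph V) (T : SpanningTree G) {b a w : V}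
    (hab : Anc T b a) (harc : G.A a w) (hw : InLoop G T b w) : InLoop G T b a := by
  obtain ⟨hbw, p, ⟨hpne, hphd, hplast, hpch⟩, hall⟩ := hw
  obtain ⟨x, l, rfl⟩ := List.exists_cons_of_ne_nil hpne
  have hx : x = w := by simpa using hphd
  subst hx
  refine ⟨hab, a :: x :: l, ⟨by simp, rfl, by simpa using hplast, ?_⟩, ?_⟩
  · exact List.isChain_cons_cons.mpr ⟨harc, hpch⟩
  · intro y hy
    rcases List.mem_cons.mp hy with rfl | hy'
    · exact hab
    · exact hall _ hy'

private lemma ram_arc_le [LinearOrder V] (G : FlowGraph V) (T : SpanningTree G)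
    (hanc : ∀ a b, Anc T a b → b ≤ a)
    (hint : ∀ u x y, Anc T u x → x ≤ y → y ≤ u → Anc T u y)
    (hcross : ∀ x y, G.A x y → ¬ Anc T x y → ¬ Anc T y x → y < x)
    (h : V → Option V)
    (hsome : ∀ v u, h v = some u ↔
      (Anc T u v ∧ u ≠ v ∧ InLoop G T u v ∧
        ∀ u', Anc T u' v → u' ≠ v → InLoop G T u' v → Anc T u' u))
    {a b : V} (harc : (ramalingam G T h).A a b) : b ≤ a := by
  rcases harc with ⟨hab, hnb⟩ | ⟨hu, v, w, hhb, rfl, _⟩ | ⟨w, _, ⟨haw, hw, hna⟩, _⟩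
  · -- original non-back arc
    by_cases hba : Anc T b a
    · rcases eq_or_ne a b with rfl | hne
      · exact le_rfl
      · exact absurd ⟨hba, hne⟩ hnb
    · by_cases habAnc : Anc T a b
      · exact hanc _ _ habAnc
      · exact (hcross a b hab habAnc hba).le
  · -- arc (parent (h b), b)
    have hhu := ((hsome b hu).mp hhb).1
    have : Anc T (T.parent hu) b := hhu.tail rfl
    exact hanc _ _ this
  · -- arc (a, b) for a non-head entry (a, w) with loop(b) largest
    have hbw : Anc T b w := hw.1
    have hnba : ¬ Anc T b a := fun hba => hna (inloop_of_arc G T hba haw hw)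
    have haw' : a ≠ w := by
      rintro rfl; exact hnba hbw
    have hnwa : ¬ Anc T w a := fun hwa => hnba (hwa.trans hbw)
    have hwa : w ≤ a := by
      by_cases hawAnc : Anc T a w
      · exact hanc _ _ hawAnc
      · exact (hcross a w haw hawAnc hnwa).le
    by_contra hba
    push_neg at hba
    exact hnba (hint b w a hbw hwa hba.le)

private lemma ram_path_le [LinearOrder V] (G' : FlowGraph V)
    (hle : ∀ a b, G'.A a b → b ≤ a) :
    ∀ (p : List V) (a b : V), G'.IsPath p a b → b ≤ a := by
  intro p
  induction p with
  | nil => intro a b hp; exact absurd rfl hp.1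
  | cons x l ih =>
    intro a b hp
    obtain ⟨-, hhd, hlast, hch⟩ := hp
    have hxa : x = a := by simpa using hhd
    subst hxa
    cases l with
    | nil =>
      have hb : x = b := by simpa using hlast
      exact hb.ge
    | cons y l' =>
      have hch' := List.isChain_cons_cons.mp hch
      have h1 : b ≤ y := ih y b ⟨by simp, rfl, by simpa using hlast, hch'.2⟩
      exact h1.trans (hle _ _ hch'.1)

/-- The graph produced by Ramalingam's streamlined transformation is acyclic. -/
theorem stmt15 [LinearOrder V] (G : FlowGraph V) (T : SpanningTree G)
    (hreach : ∀ v, G.Reach G.s v)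
    (hanc : ∀ a b, Anc T a b → b ≤ a)
    (hint : ∀ u x y, Anc T u x → x ≤ y → y ≤ u → Anc T u y)
    (hcross : ∀ x y, G.A x y → ¬ Anc T x y → ¬ Anc T y x → y < x)
    (h : V → Option V)
    (hsome : ∀ v u, h v = some u ↔
      (Anc T u v ∧ u ≠ v ∧ InLoop G T u v ∧
        ∀ u', Anc T u' v → u' ≠ v → InLoop G T u' v → Anc T u' u))
    (hnone : ∀ v, h v = none ↔ ∀ u, ¬ (Anc T u v ∧ u ≠ v ∧ InLoop G T u v)) :
    (ramalingam G T h).Acyclic := by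
  intro a b hne ⟨⟨p, hp⟩, ⟨q, hq⟩⟩
  have hle : ∀ a b, (ramalingam G T h).A a b → b ≤ a := fun a b harc =>
    ram_arc_le G T hanc hint hcross h hsome harc
  have h1 : b ≤ a := ram_path_le _ hle p a b hp
  have h2 : a ≤ b := ram_path_le _ hle q b a hq
  exact hne (le_antisymm h2 h1)
end

section
/- Let G be a flow graph with spanning tree T, and let u be a vertex. If v ∈ loop(u) and x is a vertex that is not a descendant of u in T, then x dominates v if and only if x dominates u. -/
universe u

variable {V : Type u}

attribute [local instance] Classical.propDecidable

open FlowGraph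

lemma path_append' (G : FlowGraph V) {p q : List V} {a b c : V}
    (hp : G.IsPath p a b) (hq : G.IsPath q b c) :
    G.IsPath (p ++ q.tail) a c := by
  obtain ⟨hp0, hpa, hpb, hpc⟩ := hp
  obtain ⟨hq0, hqa, hqc, hqch⟩ := hq
  obtain ⟨t, rfl⟩ : ∃ t, q = b :: t := by
    cases q with
    | nil => exact absurd rfl hq0
    | cons h t =>
      simp only [List.head?] at hqa
      exact ⟨t, by rw [Option.some.injEq] at hqa; rw [hqa]⟩
  obtain ⟨p', rfl⟩ : ∃ p', p = a :: p' := by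
    cases p with
    | nil => exact absurd rfl hp0
    | cons h t =>
      simp only [List.head?] at hpa
      exact ⟨t, by rw [Option.some.injEq] at hpa; rw [hpa]⟩
  rw [List.Chain', List.isChain_cons] at hqch
  refine ⟨by simp, by simp, ?_, ?_⟩
  · simp only [List.tail_cons]
    cases t with
    | nil =>
      simp only [List.getLast?] at hqc
      simp only [List.append_nil]
      rw [hpb]
      simpa using hqc
    | cons h' t' =>
      rw [List.getLast?_append]
      simp only [List.getLast?_cons_cons] at hqc ⊢
      rw [hqc]
      simp
  · simp only [List.tail_cons]
    refine List.isChain_append.mpr ⟨hpc, hqch.2, ?_⟩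
    intro x hx y hy
    rw [hpb] at hx
    simp only [Option.mem_def, Option.some.injEq] at hx
    subst hx
    exact hqch.1 y hy

lemma anc_path (G : FlowGraph V) (T : SpanningTree G) {u v : V} (h : Anc T u v) :
    ∃ p, G.IsPath p u v ∧ ∀ y ∈ p, Anc T u y := by
  unfold Anc at h
  induction h using Relation.ReflTransGen.head_induction_on with
  | refl => exact ⟨[u], ⟨by simp, by simp, by simp, by simp [List.Chain']⟩, by intro y hy; simp at hy; subst hy; exact Relation.ReflTransGen.refl⟩
  | head hstep hrest ih =>
    rename_i a c
    obtain ⟨p, hp, hanc⟩ := ih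
    by_cases ha : a = G.s
    · -- then parent a = a, so c = a
      have : c = a := by rw [← hstep, ha, T.parent_root]
      subst this
      exact ⟨p, hp, hanc⟩
    · refine ⟨p ++ [a], ?_, ?_⟩
      · have harc : G.A c a := hstep ▸ T.parent_arc a ha
        have : G.IsPath [c, a] c a := ⟨by simp, by simp, by simp, by simp [List.Chain', harc]⟩
        simpa using path_append' G hp this
      · intro y hy
        rcases List.mem_append.mp hy with h' | h'
        · exact hanc y h'
        · simp only [List.mem_singleton] at h'
          subst h'
          exact Relation.ReflTransGen.head hstep hrest

/-- If `v ∈ loop(u)` and `x` is not a descendant of `u` in `T`, then `x` dominates `v`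
if and only if `x` dominates `u`. -/
theorem stmt18 (G : FlowGraph V) (T : SpanningTree G)
    (hreach : ∀ v, G.Reach G.s v)
    (u v x : V) (hloop : InLoop G T u v) (hx : ¬ Anc T u x) :
    (G.Dom x v ↔ G.Dom x u) := by
  obtain ⟨hancv, q, hq, hqanc⟩ := hloop
  constructor
  · -- Dom x v → Dom x u
    intro hdom p hp
    obtain ⟨r, hr, hranc⟩ := anc_path G T hancv
    have hp' := path_append' G hp hr
    have := hdom _ hp'
    rcases List.mem_append.mp this with h' | h'
    · exact h'
    · exact absurd (hranc x (List.mem_of_mem_tail h')) hx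
  · -- Dom x u → Dom x v
    intro hdom p hp
    have hp' := path_append' G hp hq
    have := hdom _ hp'
    rcases List.mem_append.mp this with h' | h'
    · exact h'
    · exact absurd (hqanc x (List.mem_of_mem_tail h')) hx
end

section
/- Let G be a flow graph with depth-first spanning tree T and numbered in reverse preorder (identifying vertices with numbers, so every tree or forward arc (v, w) has v > w and every cross or back arc (v, w) has v < w). If (u, v) is an arc obtained from an original arc (x, v) by replacing x with an ancestor u of x in T, and u ≥ v, then u is an ancestor of v in T, i.e., (u, v) is a tree or forward arc. -/
universe u

variable {V : Type u}

attribute [local instance] Classical.propDecidable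

open FlowGraph

/-- `T` is a depth-first spanning tree of `G` with preorder `pre` and postorder `post`. -/
def IsDFSOrders (G : FlowGraph V) (T : SpanningTree G) (pre post : V → ℕ) : Prop :=
  Function.Injective pre ∧ Function.Injective post ∧
  (∀ u v, Anc T u v ↔ (pre u ≤ pre v ∧ post v ≤ post u)) ∧
  (∀ x y, G.A x y → ¬ Anc T x y → ¬ Anc T y x → pre y < pre x)

lemma chain_comparable {f : V → V} :
    ∀ {x u v : V}, Relation.ReflTransGen (fun a b => f a = b) x u →
      Relation.ReflTransGen (fun a b => f a = b) x v →
      Relation.ReflTransGen (fun a b => f a = b) u v ∨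
      Relation.ReflTransGen (fun a b => f a = b) v u := by
  intro x u v hxu
  induction hxu using Relation.ReflTransGen.head_induction_on with
  | refl => exact fun hxv => Or.inl hxv
  | head hstep _ ih =>
    intro hxv
    rcases hxv.cases_head with rfl | ⟨c, hc, hcv⟩
    · exact Or.inr (Relation.ReflTransGen.head hstep (by assumption))
    · cases hstep; cases hc; exact ih hcv

/-- Reverse preorder: `u ≥ v` in reverse preorder means `pre u ≤ pre v`. If `(u, v)` is
obtained from an original arc `(x, v)` by replacing `x` with an ancestor `u` of `x` in a
depth-first spanning tree `T`, and `u ≥ v` in reverse preorder, then `u` is an ancestor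
of `v` in `T`, i.e. `(u, v)` is a tree or forward arc. -/
theorem stmt19 (G : FlowGraph V) (T : SpanningTree G) (pre post : V → ℕ)
    (hdfs : IsDFSOrders G T pre post)
    (x v u : V) (harc : G.A x v) (hux : Anc T u x) (huv : pre u ≤ pre v) :
    Anc T u v := by
  obtain ⟨hpre, hpost, hanc, hcross⟩ := hdfs
  by_contra h
  have hux' := (hanc u x).mp hux
  have hpost_uv : post u < post v := by
    by_contra h'
    exact h ((hanc u v).mpr ⟨huv, le_of_not_gt h'⟩)
  have hxv : ¬ Anc T x v := fun hxv => h (Relation.ReflTransGen.trans hxv hux)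
  have hvx : Anc T v x := by
    by_contra hvx
    have := hcross x v harc hxv hvx
    exact hvx ((hanc v x).mpr ⟨this.le, le_trans hux'.2 hpost_uv.le⟩)
  rcases chain_comparable hvx hux with hcv | hcv
  · -- Anc u v
    exact h hcv
  · -- Anc v u ⇒ u = v
    have := (hanc v u).mp hcv
    have : u = v := hpre (le_antisymm huv this.1)
    exact h (this ▸ Relation.ReflTransGen.refl)
end
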